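/- First-order criticality on O(d)^n: if R* ∈ O(d)^n minimizes F(R) = tr(Q Rᵀ R) over O(d)^n (Q ∈ Sym(dn)), and Λ* = SymBlockDiag_d(Q R*ᵀ R*), then (Q − Λ*) R*ᵀ = 0. -/

import Mathlib

open Matrix

/-- The Gram matrix `Rᵀ R ∈ ℝ^{dn×dn}` of a block matrix `R = (R₁ ⋯ Rₙ) ∈ ℝ^{d×dn}`. -/
def gram {d n : ℕ} (R : Fin n → Matrix (Fin d) (Fin d) ℝ) :
    Matrix (Fin n × Fin d) (Fin n × Fin d) ℝ :=
  Matrix.of fun p q => ((R p.1)ᵀ * R q.1) p.2 q.2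

/-- The symmetrized `d×d` block-diagonal of a `dn×dn` matrix. -/
noncomputable def symBlockDiag {d n : ℕ} (M : Matrix (Fin n × Fin d) (Fin n × Fin d) ℝ) :
    Matrix (Fin n × Fin d) (Fin n × Fin d) ℝ :=
  Matrix.of fun p q => if p.1 = q.1 then (M p q + M q p) / 2 else 0

/-- The transpose `Rᵀ ∈ ℝ^{dn×d}` of a block matrix `R = (R₁ ⋯ Rₙ) ∈ ℝ^{d×dn}`. -/
def blockTranspose {d n : ℕ} (R : Fin n → Matrix (Fin d) (Fin d) ℝ) :
    Matrix (Fin n × Fin d) (Fin d) ℝ :=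
  Matrix.of fun p c => R p.1 c p.2

/-!
Replacing a single block `Rᵢ` by an orthogonal `S` changes `F(R) = tr(Q Rᵀ R)` by an affine
function of `S`: the only quadratic term is `tr(S Qᵢᵢ Sᵀ) = tr Qᵢᵢ`. Minimality of `R*` under
`Rᵢ ↦ Rᵢ exp(tK)`, `K` skew, then forces the `i`-th diagonal block `Dᵢ` of `Q R*ᵀ R*` to be
symmetric. Since `Rᵢ Rᵢᵀ = 1`, the `i`-th block row of `Q R*ᵀ` is `Dᵢ Rᵢᵀ`, while that of
`Λ* R*ᵀ` is `½(Dᵢ + Dᵢᵀ) Rᵢᵀ`, which is the same matrix.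
-/

open NormedSpace Function

namespace Matrix

variable {m : Type*} [Fintype m] [DecidableEq m]

attribute [local instance] Matrix.linftyOpNormedRing Matrix.linftyOpNormedAlgebra in
theorem trace_mul_eq_zero_of_forall_trace_le_trace_mul {A K : Matrix m m ℝ} (hK : Kᵀ = -K)
    (hmin : ∀ G : Matrix m m ℝ, Gᵀ * G = 1 → A.trace ≤ (A * G).trace) :
    (A * K).trace = 0 := by
  -- `t ↦ exp (t K)` is a curve in `O(m)` through `1` with velocity `K`.
  have horth (t : ℝ) : (exp (t • K))ᵀ * exp (t • K) = 1 := by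
    rw [← exp_transpose, transpose_smul, hK, smul_neg,
      ← exp_add_of_commute _ _ (Commute.refl (t • K)).neg_left, neg_add_cancel, exp_zero]
  have hderiv : HasDerivAt (fun t : ℝ => (A * exp (t • K)).trace) (A * K).trace 0 := by
    have := (hasDerivAt_exp_smul_const (𝕂 := ℝ) K (0 : ℝ)).const_mul A
    rw [zero_smul, exp_zero, one_mul] at this
    exact (traceLinearMap m ℝ ℝ).toContinuousLinearMap.hasFDerivAt.comp_hasDerivAt 0 this
  refine IsLocalMin.hasDerivAt_eq_zero (Filter.Eventually.of_forall fun t => ?_) hderiv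
  simpa using hmin _ (horth t)

theorem isSymm_of_forall_trace_le_trace_mul {A : Matrix m m ℝ}
    (hmin : ∀ G : Matrix m m ℝ, Gᵀ * G = 1 → A.trace ≤ (A * G).trace) : A.IsSymm := by
  refine IsSymm.ext fun a b => ?_
  have hK : (single a b (1 : ℝ) - single b a 1)ᵀ = -(single a b 1 - single b a 1) := by
    rw [transpose_sub, transpose_single, transpose_single, neg_sub]
  have := trace_mul_eq_zero_of_forall_trace_le_trace_mul hK hmin
  simp only [Matrix.mul_sub, trace_sub, trace_mul_single] at this
  simpa [sub_eq_zero] using this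

end Matrix

section BlockMatrices

variable {d n : ℕ} {m : Type*}

-- `d` is explicit: with `d` still a metavariable, `(blockIncl i)ᵀ * M` would elaborate through
-- the `CStarMatrix` default multiplication instance.
def blockIncl (d : ℕ) (i : Fin n) : Matrix (Fin n × Fin d) (Fin d) ℝ :=
  (1 : Matrix (Fin n × Fin d) (Fin n × Fin d) ℝ).submatrix (Equiv.refl _) (Prod.mk i)

theorem blockIncl_transpose_mul (i : Fin n) (M : Matrix (Fin n × Fin d) m ℝ) :
    (blockIncl d i)ᵀ * M = M.submatrix (Prod.mk i) id := by
  rw [blockIncl, transpose_submatrix, transpose_one, one_submatrix_mul]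
  rfl

theorem mul_blockIncl (i : Fin n) (M : Matrix m (Fin n × Fin d) ℝ) :
    M * blockIncl d i = M.submatrix id (Prod.mk i) := by
  rw [blockIncl, mul_submatrix_one]
  rfl

theorem blockIncl_transpose_mul_mul_blockIncl (i : Fin n)
    (M : Matrix (Fin n × Fin d) (Fin n × Fin d) ℝ) :
    (blockIncl d i)ᵀ * M * blockIncl d i = M.submatrix (Prod.mk i) (Prod.mk i) := by
  rw [blockIncl_transpose_mul, mul_blockIncl]
  rfl

theorem ext_blockIncl {M N : Matrix (Fin n × Fin d) m ℝ}
    (h : ∀ i : Fin n, (blockIncl d i)ᵀ * M = (blockIncl d i)ᵀ * N) : M = N := by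
  ext ⟨i, x⟩ c
  have := congr_fun₂ (h i) x c
  rwa [blockIncl_transpose_mul, blockIncl_transpose_mul] at this

theorem blockIncl_transpose_mul_blockTranspose (R : Fin n → Matrix (Fin d) (Fin d) ℝ)
    (i : Fin n) : (blockIncl d i)ᵀ * blockTranspose R = (R i)ᵀ := by
  rw [blockIncl_transpose_mul]
  rfl

theorem blockTranspose_transpose_mul_blockIncl (R : Fin n → Matrix (Fin d) (Fin d) ℝ)
    (i : Fin n) : (blockTranspose R)ᵀ * blockIncl d i = R i := by
  rw [← transpose_transpose (R i), ← blockIncl_transpose_mul_blockTranspose R i, transpose_mul,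
    transpose_transpose]

theorem blockTranspose_update (R : Fin n → Matrix (Fin d) (Fin d) ℝ) (i : Fin n)
    (S : Matrix (Fin d) (Fin d) ℝ) :
    blockTranspose (update R i S) = blockTranspose (update R i 0) + blockIncl d i * Sᵀ := by
  ext ⟨j, x⟩ c
  rcases eq_or_ne j i with rfl | h
  · simp [blockTranspose, blockIncl, mul_apply, one_apply]
  · simp [blockTranspose, blockIncl, mul_apply, one_apply, h]

theorem gram_eq_mul_transpose (R : Fin n → Matrix (Fin d) (Fin d) ℝ) :
    gram R = blockTranspose R * (blockTranspose R)ᵀ := by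
  ext p q
  simp [_root_.gram, blockTranspose, mul_apply]

theorem submatrix_mul_gram (M : Matrix (Fin n × Fin d) (Fin n × Fin d) ℝ)
    (R : Fin n → Matrix (Fin d) (Fin d) ℝ) (i : Fin n) :
    (M * gram R).submatrix (Prod.mk i) (Prod.mk i)
      = (blockIncl d i)ᵀ * M * blockTranspose R * R i := by
  rw [← blockIncl_transpose_mul_mul_blockIncl, gram_eq_mul_transpose]
  simp only [Matrix.mul_assoc, blockTranspose_transpose_mul_blockIncl]

theorem blockIncl_transpose_mul_symBlockDiag (M : Matrix (Fin n × Fin d) (Fin n × Fin d) ℝ)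
    (i : Fin n) :
    (blockIncl d i)ᵀ * symBlockDiag M
      = ((2 : ℝ)⁻¹ • (M.submatrix (Prod.mk i) (Prod.mk i)
          + (M.submatrix (Prod.mk i) (Prod.mk i))ᵀ)) * (blockIncl d i)ᵀ := by
  rw [blockIncl_transpose_mul]
  ext x ⟨j, z⟩
  rcases eq_or_ne i j with rfl | h
  · simp [blockIncl, symBlockDiag, mul_apply, one_apply]
    ring
  · simp [blockIncl, symBlockDiag, mul_apply, one_apply, h]

variable {Q : Matrix (Fin n × Fin d) (Fin n × Fin d) ℝ} {R : Fin n → Matrix (Fin d) (Fin d) ℝ}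

theorem blockIncl_transpose_mul_mul_blockTranspose (hR : ∀ i, (R i)ᵀ * R i = 1) (i : Fin n) :
    (blockIncl d i)ᵀ * Q * blockTranspose R
      = (Q * gram R).submatrix (Prod.mk i) (Prod.mk i) * (R i)ᵀ := by
  rw [submatrix_mul_gram, Matrix.mul_assoc _ (R i), mul_eq_one_comm.mp (hR i), Matrix.mul_one]

theorem trace_mul_gram_update (hQ : Q.IsSymm) (i : Fin n) {S : Matrix (Fin d) (Fin d) ℝ}
    (hS : Sᵀ * S = 1) :
    (Q * gram (update R i S)).trace
      = (Q * gram (update R i 0)).trace + (Q * (blockIncl d i * (blockIncl d i)ᵀ)).trace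
        + 2 * ((blockIncl d i)ᵀ * Q * blockTranspose (update R i 0) * S).trace := by
  set X := blockTranspose (update R i 0)
  set J := blockIncl d i
  have hgram : gram (update R i S) = X * Xᵀ + X * S * Jᵀ + J * Sᵀ * Xᵀ + J * Jᵀ := by
    rw [gram_eq_mul_transpose, blockTranspose_update, transpose_add, transpose_mul,
      transpose_transpose, Matrix.add_mul, Matrix.mul_add, Matrix.mul_add,
      show J * Sᵀ * (S * Jᵀ) = J * Jᵀ by
        rw [Matrix.mul_assoc, ← Matrix.mul_assoc Sᵀ, hS, Matrix.one_mul]]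
    simp only [Matrix.mul_assoc]
    abel
  have hcross₁ : (Q * (X * S * Jᵀ)).trace = (Jᵀ * Q * X * S).trace := by
    rw [← Matrix.mul_assoc, trace_mul_comm]
    simp only [Matrix.mul_assoc]
  have hcross₂ : (Q * (J * Sᵀ * Xᵀ)).trace = (Jᵀ * Q * X * S).trace := by
    rw [← trace_transpose, ← hcross₁]
    simp only [transpose_mul, transpose_transpose, hQ.eq]
    rw [trace_mul_comm]
    simp only [Matrix.mul_assoc]
  rw [hgram, gram_eq_mul_transpose]
  simp only [Matrix.mul_add, trace_add, hcross₁, hcross₂]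
  ring

theorem isSymm_submatrix_mul_gram_of_isMinOn (hQ : Q.IsSymm) (hR : ∀ i, (R i)ᵀ * R i = 1)
    (hmin : IsMinOn (fun R' => (Q * gram R').trace) {R' | ∀ i, (R' i)ᵀ * R' i = 1} R)
    (i : Fin n) : ((Q * gram R).submatrix (Prod.mk i) (Prod.mk i)).IsSymm := by
  set J := blockIncl d i
  set C := Jᵀ * Q * blockTranspose (update R i 0)
  have hCR : (C * R i).IsSymm := by
    refine isSymm_of_forall_trace_le_trace_mul fun G hG => ?_
    have hRG : (R i * G)ᵀ * (R i * G) = 1 := by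
      rw [transpose_mul, Matrix.mul_assoc, ← Matrix.mul_assoc (R i)ᵀ, hR i, Matrix.one_mul, hG]
    have horth (j : Fin n) : (update R i (R i * G) j)ᵀ * update R i (R i * G) j = 1 := by
      rcases eq_or_ne j i with rfl | h
      · rwa [update_self]
      · rw [update_of_ne h, hR j]
    have := isMinOn_iff.mp hmin _ horth
    conv_lhs at this => rw [← update_eq_self i R]
    rw [trace_mul_gram_update hQ i (hR i), trace_mul_gram_update hQ i hRG,
      ← Matrix.mul_assoc C] at this
    linarith
  have hdiag : (Q * gram R).submatrix (Prod.mk i) (Prod.mk i)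
      = C * R i + Q.submatrix (Prod.mk i) (Prod.mk i) := by
    have hX := blockTranspose_update R i (R i)
    rw [update_eq_self] at hX
    rw [submatrix_mul_gram, hX, Matrix.mul_add, Matrix.add_mul, ← Matrix.mul_assoc (Jᵀ * Q) J,
      Matrix.mul_assoc _ (R i)ᵀ, hR i, Matrix.mul_one, blockIncl_transpose_mul_mul_blockIncl]
  rw [hdiag]
  exact hCR.add (hQ.submatrix _)

end BlockMatrices

/-- First-order criticality: if `R*` minimizes `tr(Q Rᵀ R)` over `O(d)^n` and
`Λ* = SymBlockDiag_d(Q R*ᵀ R*)`, then `(Q − Λ*) R*ᵀ = 0`. -/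
theorem first_order_criticality {d n : ℕ}
    (Q : Matrix (Fin n × Fin d) (Fin n × Fin d) ℝ) (hQ : Q.IsSymm)
    (R : Fin n → Matrix (Fin d) (Fin d) ℝ)
    (hR : ∀ i, (R i)ᵀ * R i = 1)
    (hmin : ∀ R' : Fin n → Matrix (Fin d) (Fin d) ℝ,
      (∀ i, (R' i)ᵀ * R' i = 1) → (Q * gram R).trace ≤ (Q * gram R').trace) :
    (Q - symBlockDiag (Q * gram R)) * blockTranspose R = 0 := by
  refine ext_blockIncl fun i => ?_
  have hD := (isSymm_submatrix_mul_gram_of_isMinOn hQ hR (isMinOn_iff.mpr hmin) i).eq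
  rw [Matrix.sub_mul, Matrix.mul_sub, ← Matrix.mul_assoc _ Q,
    ← Matrix.mul_assoc _ (symBlockDiag _), blockIncl_transpose_mul_symBlockDiag, hD,
    ← two_smul ℝ, smul_smul, inv_mul_cancel₀ two_ne_zero, one_smul,
    Matrix.mul_assoc _ (blockIncl d i)ᵀ, blockIncl_transpose_mul_blockTranspose,
    blockIncl_transpose_mul_mul_blockTranspose hR, sub_self, Matrix.mul_zero]
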